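/- Let Delta_tau = (1/h) * arccos( (e0 - 2h^2)/sqrt(e0^2 - 4h^2 m0) ) where e0 >= 4h^2 (since |eta0| >= 2h) and e0 - m0 >= h^2 + kappa^2 and e0 <= 4N^2 + h^2 (say |eta0| <= 2N, |y0| <= 1), with 0 < kappa and h, N > 0, kappa <= N. Then kappa/(2N^2) <= Delta_tau <= pi/(2h). -/

import Mathlib

/-!
Write `A = e0 - 2h²`. The discriminant splits as
`e0² - 4h²m0 = A² + 4h²(e0 - m0 - h²) ≥ A² + (2hκ)²`, so the argument of `arccos` is a
nonnegative number at most `A / √(A² + (2hκ)²)`. Nonnegativity gives `arccos ≤ π/2`. For the lower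
bound, `arccos x ≥ sin (arccos x) = √(1 - x²)`, which at `x = A / √(A² + (2hκ)²)` equals
`2hκ / √(A² + (2hκ)²)`; since `A ≤ 4N² - h²` and `hκ ≤ N²`, the square root is at most `4N²`.
-/

/-- The cross product on `EuclideanSpace ℝ (Fin 3)`. -/
noncomputable def cross3 (a b : EuclideanSpace ℝ (Fin 3)) : EuclideanSpace ℝ (Fin 3) :=
  (WithLp.equiv 2 (Fin 3 → ℝ)).symm
    ![a 1 * b 2 - a 2 * b 1, a 2 * b 0 - a 0 * b 2, a 0 * b 1 - a 1 * b 0]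

namespace Real

theorem sqrt_one_sub_sq_le_arccos (x : ℝ) : √(1 - x ^ 2) ≤ arccos x :=
  sin_arccos x ▸ sin_le (arccos_nonneg x)

theorem div_sqrt_add_sq_le_arccos_div_sqrt {a c d : ℝ} (ha : 0 ≤ a) (hc : 0 < c)
    (hd : a ^ 2 + c ^ 2 ≤ d) : c / √(a ^ 2 + c ^ 2) ≤ arccos (a / √d) := by
  have hpos : 0 < a ^ 2 + c ^ 2 := by positivity
  calc c / √(a ^ 2 + c ^ 2) = √(1 - (a / √(a ^ 2 + c ^ 2)) ^ 2) := by
        rw [div_pow, sq_sqrt hpos.le, one_sub_div hpos.ne', add_sub_cancel_left,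
          sqrt_div' _ hpos.le, sqrt_sq hc.le]
    _ ≤ arccos (a / √(a ^ 2 + c ^ 2)) := sqrt_one_sub_sq_le_arccos _
    _ ≤ arccos (a / √d) := arccos_le_arccos (by gcongr)

end Real

theorem stmt_9_general (h κ N : ℝ) (hh : 0 < h) (hκ : 0 < κ) (hN : max h κ ≤ N)
    (y0 eta0 : EuclideanSpace ℝ (Fin 3))
    (hy0 : ‖y0‖ ≤ 1) (heta_lo : 2 * h ≤ ‖eta0‖) (heta_hi : ‖eta0‖ ≤ 2 * N)
    (e0 m0 Δτ : ℝ)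
    (he0 : e0 = ‖eta0‖ ^ 2 + h ^ 2 * ‖y0‖ ^ 2)
    (hlow : e0 - m0 ≥ h ^ 2 + κ ^ 2)
    (hΔτ : Δτ = (1 / h) * Real.arccos ((e0 - 2 * h ^ 2) / Real.sqrt (e0 ^ 2 - 4 * h ^ 2 * m0))) :
    κ / (2 * N ^ 2) ≤ Δτ ∧ Δτ ≤ Real.pi / (2 * h) := by
  obtain ⟨hhN, hκN⟩ := max_le_iff.mp hN
  have hy_sq : ‖y0‖ ^ 2 ≤ 1 := pow_le_one₀ (norm_nonneg _) hy0
  have heta_sq_lo : (2 * h) ^ 2 ≤ ‖eta0‖ ^ 2 := by gcongr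
  have heta_sq_hi : ‖eta0‖ ^ 2 ≤ (2 * N) ^ 2 := by gcongr
  have hA_nonneg : 0 ≤ e0 - 2 * h ^ 2 := by nlinarith
  have hA_le : e0 - 2 * h ^ 2 ≤ 4 * N ^ 2 - h ^ 2 := by nlinarith
  have hdisc : (e0 - 2 * h ^ 2) ^ 2 + (2 * h * κ) ^ 2 ≤ e0 ^ 2 - 4 * h ^ 2 * m0 := by
    linear_combination (2 * h) ^ 2 * hlow
  have hsqrt_le : √((e0 - 2 * h ^ 2) ^ 2 + (2 * h * κ) ^ 2) ≤ 4 * N ^ 2 := by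
    rw [Real.sqrt_le_left (by positivity)]
    have hA_sq : (e0 - 2 * h ^ 2) ^ 2 ≤ (4 * N ^ 2 - h ^ 2) ^ 2 := by gcongr
    have hhκ_sq : (h * κ) ^ 2 ≤ (h * N) ^ 2 := by gcongr
    have hh_sq : h ^ 2 * h ^ 2 ≤ h ^ 2 * N ^ 2 := by gcongr
    nlinarith
  subst hΔτ
  constructor
  · calc κ / (2 * N ^ 2) = 1 / h * (2 * h * κ / (4 * N ^ 2)) := by field_simp; ring
      _ ≤ 1 / h * (2 * h * κ / √((e0 - 2 * h ^ 2) ^ 2 + (2 * h * κ) ^ 2)) := by gcongr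
      _ ≤ _ := by
        gcongr
        exact Real.div_sqrt_add_sq_le_arccos_div_sqrt hA_nonneg (by positivity) hdisc
  · calc _ ≤ 1 / h * (Real.pi / 2) := by
          gcongr
          exact Real.arccos_le_pi_div_two.mpr (by positivity)
      _ = Real.pi / (2 * h) := by field_simp

theorem stmt_9 (h κ N : ℝ) (hh : 0 < h) (hκ : 0 < κ) (hN : max h κ ≤ N)
    (y0 eta0 : EuclideanSpace ℝ (Fin 3))
    (hy0 : ‖y0‖ ≤ 1) (heta_lo : 2 * h ≤ ‖eta0‖) (heta_hi : ‖eta0‖ ≤ 2 * N)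
    (e0 m0 Δτ : ℝ)
    (he0 : e0 = ‖eta0‖ ^ 2 + h ^ 2 * ‖y0‖ ^ 2)
    (hm0 : m0 = ‖cross3 eta0 y0‖ ^ 2)
    (hlow : e0 - m0 ≥ h ^ 2 + κ ^ 2)
    (hΔτ : Δτ = (1 / h) * Real.arccos ((e0 - 2 * h ^ 2) / Real.sqrt (e0 ^ 2 - 4 * h ^ 2 * m0))) :
    κ / (2 * N ^ 2) ≤ Δτ ∧ Δτ ≤ Real.pi / (2 * h) :=
  stmt_9_general h κ N hh hκ hN y0 eta0 hy0 heta_lo heta_hi e0 m0 Δτ he0 hlow hΔτ
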